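/- arXiv:2605.13284 — 2 statements merged into one kernel-verified Lean document; each statement's English description precedes it below -/
import Mathlib

section
/- Let J : ℝ^d → ℝ be twice differentiable, let Γ* ⊆ ℝ^d be a nonempty convex set such that ∇J(γ) = 0 for every γ ∈ Γ*, and let Q be a d × r real matrix with Qᵀ Q = I_r such that, for every γ* ∈ Γ*, the r × r matrix H*(γ*) := Qᵀ (∇²J(γ*)) Q is negative definite and the commutation identity Qᵀ (∇²J(γ*)) = H*(γ*) Qᵀ holds. Then the set {Qᵀ γ* : γ* ∈ Γ*} is a singleton; that is, Qᵀ γ₁ = Qᵀ γ₂ for all γ₁, γ₂ ∈ Γ*. -/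
/-!
Since `∇J` vanishes on the convex set `Γ*`, differentiating it at `γ₁` along the segment to `γ₂`
gives `∇²J(γ₁) (γ₂ - γ₁) = 0`. The commutation identity turns this into
`H*(γ₁) Qᵀ (γ₂ - γ₁) = 0`, and negative definiteness of `H*(γ₁)` forces `Qᵀ (γ₂ - γ₁) = 0`.
-/

open Matrix

theorem HasFDerivAt.apply_sub_eq_zero_of_eqOn_const {E F : Type*}
    [NormedAddCommGroup E] [NormedSpace ℝ E] [NormedAddCommGroup F] [NormedSpace ℝ F]
    {f : E → F} {f' : E →L[ℝ] F} {s : Set E} {x y : E} {c : F}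
    (hf : HasFDerivAt f f' x) (hs : Convex ℝ s) (hx : x ∈ s) (hy : y ∈ s)
    (hc : s.EqOn f fun _ => c) : f' (y - x) = 0 := by
  have hconst : HasFDerivWithinAt f (0 : E →L[ℝ] F) s x :=
    (hasFDerivWithinAt_const c x s).congr hc (hc hx)
  exact hf.hasFDerivWithinAt.unique_on hconst
    (mem_tangentConeAt_of_segment_subset (hs.segment_subset hx hy))

theorem Matrix.eq_zero_of_mulVec_eq_zero_of_negDef {n R : Type*} [Fintype n] [CommRing R]
    [Preorder R] {A : Matrix n n R} (hA : ∀ u : n → R, u ≠ 0 → u ⬝ᵥ A *ᵥ u < 0)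
    {u : n → R} (hu : A *ᵥ u = 0) : u = 0 := by
  by_contra h
  simpa [hu] using hA u h

theorem stmt0_general {d r : ℕ}
    (G : EuclideanSpace ℝ (Fin d) → EuclideanSpace ℝ (Fin d))
    (H : EuclideanSpace ℝ (Fin d) → Matrix (Fin d) (Fin d) ℝ)
    (hhess : ∀ γ, HasFDerivAt G
      ((Matrix.toEuclideanLin (H γ)).toContinuousLinearMap) γ)
    (Γstar : Set (EuclideanSpace ℝ (Fin d)))
    (hconv : Convex ℝ Γstar)
    (hstat : ∀ γ ∈ Γstar, G γ = 0)
    (Q : Matrix (Fin d) (Fin r) ℝ)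
    (hnegdef : ∀ γ ∈ Γstar, ∀ u : Fin r → ℝ, u ≠ 0 →
      u ⬝ᵥ (Qᵀ * H γ * Q).mulVec u < 0)
    (hcomm : ∀ γ ∈ Γstar, Qᵀ * H γ = (Qᵀ * H γ * Q) * Qᵀ) :
    ∀ γ₁ ∈ Γstar, ∀ γ₂ ∈ Γstar, Qᵀ.mulVec γ₁ = Qᵀ.mulVec γ₂ := by
  intro γ₁ h₁ γ₂ h₂
  have hker : H γ₁ *ᵥ (γ₂ - γ₁).ofLp = 0 := by
    have := (hhess γ₁).apply_sub_eq_zero_of_eqOn_const hconv h₁ h₂ hstat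
    simpa [toLpLin_apply] using this
  have hred : (Qᵀ * H γ₁ * Q) *ᵥ (Qᵀ *ᵥ (γ₂ - γ₁).ofLp) = 0 := by
    rw [mulVec_mulVec, ← hcomm γ₁ h₁, ← mulVec_mulVec, hker, mulVec_zero]
  have := eq_zero_of_mulVec_eq_zero_of_negDef (hnegdef γ₁ h₁) hred
  rw [WithLp.ofLp_sub, mulVec_sub, sub_eq_zero] at this
  exact this.symm

/-- Lemma A.1(i) of the paper.
Let `J : ℝ^d → ℝ` be twice differentiable (with gradient `G` and Hessian matrix `H`),
let `Γ*` be a nonempty convex set on which the gradient of `J` vanishes, and let `Q` be a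
`d × r` matrix with `Qᵀ Q = I` such that for every `γ* ∈ Γ*` the matrix
`H*(γ*) = Qᵀ H(γ*) Q` is negative definite and `Qᵀ H(γ*) = H*(γ*) Qᵀ`.
Then `{Qᵀ γ* : γ* ∈ Γ*}` is a singleton. -/
theorem stmt0 {d r : ℕ}
    (J : EuclideanSpace ℝ (Fin d) → ℝ)
    (G : EuclideanSpace ℝ (Fin d) → EuclideanSpace ℝ (Fin d))
    (H : EuclideanSpace ℝ (Fin d) → Matrix (Fin d) (Fin d) ℝ)
    (hgrad : ∀ γ, HasGradientAt J (G γ) γ)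
    (hhess : ∀ γ, HasFDerivAt G
      ((Matrix.toEuclideanLin (H γ)).toContinuousLinearMap) γ)
    (Γstar : Set (EuclideanSpace ℝ (Fin d)))
    (hne : Γstar.Nonempty) (hconv : Convex ℝ Γstar)
    (hstat : ∀ γ ∈ Γstar, G γ = 0)
    (Q : Matrix (Fin d) (Fin r) ℝ)
    (hQ : Qᵀ * Q = 1)
    (hnegdef : ∀ γ ∈ Γstar, ∀ u : Fin r → ℝ, u ≠ 0 →
      u ⬝ᵥ (Qᵀ * H γ * Q).mulVec u < 0)
    (hcomm : ∀ γ ∈ Γstar, Qᵀ * H γ = (Qᵀ * H γ * Q) * Qᵀ) :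
    ∀ γ₁ ∈ Γstar, ∀ γ₂ ∈ Γstar, Qᵀ.mulVec γ₁ = Qᵀ.mulVec γ₂ :=
  stmt0_general G H hhess Γstar hconv hstat Q hnegdef hcomm
end

section
/- Let Γ ⊆ ℝ^d be compact, let (𝒳, 𝒜) be a measurable space, and let ψ : Γ × 𝒳 → ℝ^d satisfy: ψ(·, x) is continuous on Γ for every x ∈ 𝒳; ψ(γ, ·) is measurable for every γ ∈ Γ; and E[sup_{γ ∈ Γ} ‖ψ(γ, X)‖] < ∞, where X, X₁, X₂, … are i.i.d. 𝒳-valued random variables on a probability space (Ω, ℱ, P). Let Γ* := {γ ∈ Γ : E[ψ(γ, X)] = 0} and assume Γ* is nonempty. Let (γ̂_n) be any sequence of Γ-valued random vectors such that ‖Ψ_n(γ̂_n)‖ → 0 in probability, where Ψ_n(γ) = n⁻¹ ∑_{i=1}^n ψ(γ, X_i). Then the distance d(γ̂_n, Γ*) := inf_{γ* ∈ Γ*} ‖γ̂_n − γ*‖ converges to 0 in probability as n → ∞. -/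
/-!
The mean map `g γ = E[ψ(γ, X)]` is continuous on the compact set `Γ`, so `‖g‖` has a positive
lower bound `δ` on the compact set of points of `Γ` at distance at least `ε` from its zero set
`Γ*`. A uniform law of large numbers makes `‖Ψ_n - g‖ < δ / 2` on all of `Γ` with probability
tending to one: cover `Γ` by finitely many balls on which the local oscillation of `ψ` has mean
below `δ / 8`, and apply the strong law at the centres and to the oscillations. On that event,
`‖Ψ_n(γ̂_n)‖ < δ / 2` forces `γ̂_n` to lie within `ε` of `Γ*`.
-/

open MeasureTheory ProbabilityTheory Filter Set Metric Topology

theorem measurable_sSup_image_of_continuousOn {α 𝒳 : Type*} [PseudoMetricSpace α]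
    [MeasurableSpace 𝒳] {S : Set α} (hS : TopologicalSpace.IsSeparable S) {F : α → 𝒳 → ℝ}
    (hcont : ∀ x, ContinuousOn (F · x) S) (hmeas : ∀ γ ∈ S, Measurable (F γ))
    (hbdd : ∀ x, BddAbove ((F · x) '' S)) :
    Measurable fun x => sSup ((F · x) '' S) := by
  obtain ⟨t, htS, htc, hSt⟩ := hS.exists_countable_dense_subset
  rcases t.eq_empty_or_nonempty with rfl | htne
  · rw [closure_empty, subset_empty_iff] at hSt
    simp [hSt]
  -- by continuity, the supremum over `S` equals the one over a countable dense subset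
  have hsup : ∀ x, sSup ((F · x) '' S) = sSup ((F · x) '' t) := by
    intro x
    have hdense : (F · x) '' S ⊆ closure ((F · x) '' t) := by
      rintro _ ⟨γ, hγ, rfl⟩
      exact ((hcont x γ hγ).mono htS).mem_closure_image (hSt hγ)
    exact ((isLUB_iff_of_subset_of_subset_closure (image_mono htS) hdense).1
      (isLUB_csSup (htne.image _) ((hbdd x).mono (image_mono htS)))).csSup_eq
      ((htne.mono htS).image _)
  simp_rw [hsup, sSup_image']
  have := htc.to_subtype
  exact Measurable.iSup fun γ => hmeas γ (htS γ.2)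

theorem IsCompact.exists_pos_forall_le_norm {α E : Type*} [TopologicalSpace α]
    [NormedAddCommGroup E] {K : Set α} (hK : IsCompact K) {f : α → E} (hf : ContinuousOn f K)
    (hf₀ : ∀ x ∈ K, f x ≠ 0) : ∃ δ > 0, ∀ x ∈ K, δ ≤ ‖f x‖ := by
  rcases K.eq_empty_or_nonempty with rfl | hne
  · exact ⟨1, one_pos, by simp⟩
  obtain ⟨x₀, hx₀, hmin⟩ := hK.exists_isMinOn hne hf.norm
  exact ⟨‖f x₀‖, norm_pos_iff.2 (hf₀ x₀ hx₀), fun x hx => hmin hx⟩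

section MeasureBounds

variable {Ω ι κ : Type*} [MeasurableSpace Ω] {μ : Measure Ω} {l : Filter ι}

theorem tendsto_measure_of_subset_union {s t u : ι → Set Ω} (hsub : ∀ n, s n ⊆ t n ∪ u n)
    (ht : Tendsto (fun n => μ (t n)) l (𝓝 0)) (hu : Tendsto (fun n => μ (u n)) l (𝓝 0)) :
    Tendsto (fun n => μ (s n)) l (𝓝 0) := by
  refine tendsto_of_tendsto_of_tendsto_of_le_of_le tendsto_const_nhds (by simpa using ht.add hu)
    (fun n => zero_le) fun n => ?_
  exact (measure_mono (hsub n)).trans (measure_union_le _ _)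

theorem tendsto_measure_of_subset_biUnion {s : ι → Set Ω} {t : κ → ι → Set Ω} (T : Finset κ)
    (hsub : ∀ n, s n ⊆ ⋃ j ∈ T, t j n) (ht : ∀ j ∈ T, Tendsto (fun n => μ (t j n)) l (𝓝 0)) :
    Tendsto (fun n => μ (s n)) l (𝓝 0) := by
  refine tendsto_of_tendsto_of_tendsto_of_le_of_le tendsto_const_nhds
    (by simpa using tendsto_finsetSum T ht) (fun n => zero_le) fun n => ?_
  exact (measure_mono (hsub n)).trans (measure_biUnion_finset_le T _)

end MeasureBounds

theorem norm_sub_le_two_mul {α 𝒳 E : Type*} [SeminormedAddCommGroup E] {ψ : α → 𝒳 → E}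
    {S : Set α} {M : 𝒳 → ℝ} (hdom : ∀ γ ∈ S, ∀ x, ‖ψ γ x‖ ≤ M x) {γ γ₀ : α} (hγ : γ ∈ S)
    (hγ₀ : γ₀ ∈ S) (x : 𝒳) : ‖ψ γ x - ψ γ₀ x‖ ≤ 2 * M x := by
  linarith [norm_sub_le (ψ γ x) (ψ γ₀ x), hdom γ hγ x, hdom γ₀ hγ₀ x]

section LocalOscillation

variable {α 𝒳 E : Type*} [PseudoMetricSpace α] [NormedAddCommGroup E] {ψ : α → 𝒳 → E}
  {S : Set α} {M : 𝒳 → ℝ} {γ₀ : α} {r : ℝ}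

noncomputable def localOsc (ψ : α → 𝒳 → E) (S : Set α) (γ₀ : α) (r : ℝ) (x : 𝒳) : ℝ :=
  sSup ((fun γ => ‖ψ γ x - ψ γ₀ x‖) '' (closedBall γ₀ r ∩ S))

theorem bddAbove_localOsc_image (hdom : ∀ γ ∈ S, ∀ x, ‖ψ γ x‖ ≤ M x) (hγ₀ : γ₀ ∈ S) (x : 𝒳) :
    BddAbove ((fun γ => ‖ψ γ x - ψ γ₀ x‖) '' (closedBall γ₀ r ∩ S)) :=
  ⟨2 * M x, by rintro _ ⟨γ, hγ, rfl⟩; exact norm_sub_le_two_mul hdom hγ.2 hγ₀ x⟩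

theorem norm_sub_le_localOsc (hdom : ∀ γ ∈ S, ∀ x, ‖ψ γ x‖ ≤ M x) (hγ₀ : γ₀ ∈ S) {γ : α}
    (hγ : γ ∈ closedBall γ₀ r ∩ S) (x : 𝒳) : ‖ψ γ x - ψ γ₀ x‖ ≤ localOsc ψ S γ₀ r x :=
  le_csSup (bddAbove_localOsc_image hdom hγ₀ x) (mem_image_of_mem _ hγ)

theorem localOsc_nonneg (hdom : ∀ γ ∈ S, ∀ x, ‖ψ γ x‖ ≤ M x) (hγ₀ : γ₀ ∈ S) (hr : 0 ≤ r)
    (x : 𝒳) : 0 ≤ localOsc ψ S γ₀ r x := by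
  simpa using norm_sub_le_localOsc hdom hγ₀ ⟨mem_closedBall_self hr, hγ₀⟩ x

theorem localOsc_le_of_forall_le (hγ₀ : γ₀ ∈ S) (hr : 0 ≤ r) {x : 𝒳} {c : ℝ}
    (hc : ∀ γ ∈ closedBall γ₀ r ∩ S, ‖ψ γ x - ψ γ₀ x‖ ≤ c) : localOsc ψ S γ₀ r x ≤ c :=
  csSup_le ⟨_, mem_image_of_mem _ ⟨mem_closedBall_self hr, hγ₀⟩⟩ <| by
    rintro _ ⟨γ, hγ, rfl⟩; exact hc γ hγ

theorem localOsc_le_two_mul (hdom : ∀ γ ∈ S, ∀ x, ‖ψ γ x‖ ≤ M x) (hγ₀ : γ₀ ∈ S) (hr : 0 ≤ r)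
    (x : 𝒳) : localOsc ψ S γ₀ r x ≤ 2 * M x :=
  localOsc_le_of_forall_le hγ₀ hr fun _ hγ => norm_sub_le_two_mul hdom hγ.2 hγ₀ x

theorem measurable_localOsc [MeasurableSpace 𝒳] [MeasurableSpace E] [BorelSpace E]
    [SecondCountableTopology E]
    (hS : TopologicalSpace.IsSeparable S) (hcont : ∀ x, ContinuousOn (ψ · x) S)
    (hmeas : ∀ γ, Measurable (ψ γ)) (hdom : ∀ γ ∈ S, ∀ x, ‖ψ γ x‖ ≤ M x) (hγ₀ : γ₀ ∈ S) :
    Measurable (localOsc ψ S γ₀ r) :=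
  measurable_sSup_image_of_continuousOn (hS.mono inter_subset_right)
    (fun x => ((hcont x).mono inter_subset_right).sub continuousOn_const |>.norm)
    (fun γ _ => ((hmeas γ).sub (hmeas γ₀)).norm) (fun x => bddAbove_localOsc_image hdom hγ₀ x)

theorem tendsto_localOsc (hcont : ∀ x, ContinuousOn (ψ · x) S)
    (hdom : ∀ γ ∈ S, ∀ x, ‖ψ γ x‖ ≤ M x) (hγ₀ : γ₀ ∈ S) (x : 𝒳) :
    Tendsto (fun r => localOsc ψ S γ₀ r x) (𝓝[>] 0) (𝓝 0) := by
  refine Metric.tendsto_nhds.2 fun η hη => ?_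
  obtain ⟨ρ, hρ, hclose⟩ := Metric.continuousWithinAt_iff.1 (hcont x γ₀ hγ₀) (η / 2) (half_pos hη)
  filter_upwards [Ioo_mem_nhdsGT hρ] with r ⟨hr, hrρ⟩
  have hle : localOsc ψ S γ₀ r x ≤ η / 2 := localOsc_le_of_forall_le hγ₀ hr.le fun γ hγ =>
    (dist_eq_norm (ψ γ x) _ ▸ hclose hγ.2 ((mem_closedBall.1 hγ.1).trans_lt hrρ)).le
  rw [Real.dist_0_eq_abs, abs_of_nonneg (localOsc_nonneg hdom hγ₀ hr.le x)]
  linarith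

variable [MeasurableSpace 𝒳] [MeasurableSpace E] [BorelSpace E] [SecondCountableTopology E]
  {Ω : Type*} [MeasurableSpace Ω] {P : Measure Ω} {Y : Ω → 𝒳}

theorem integrable_localOsc_comp (hS : TopologicalSpace.IsSeparable S)
    (hcont : ∀ x, ContinuousOn (ψ · x) S) (hmeas : ∀ γ, Measurable (ψ γ))
    (hdom : ∀ γ ∈ S, ∀ x, ‖ψ γ x‖ ≤ M x) (hγ₀ : γ₀ ∈ S) (hr : 0 ≤ r) (hY : AEMeasurable Y P)
    (hM : Integrable (fun ω => M (Y ω)) P) :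
    Integrable (fun ω => localOsc ψ S γ₀ r (Y ω)) P := by
  refine (hM.const_mul 2).mono'
    ((measurable_localOsc hS hcont hmeas hdom hγ₀).comp_aemeasurable hY).aestronglyMeasurable
    (ae_of_all _ fun ω => ?_)
  rw [Real.norm_of_nonneg (localOsc_nonneg hdom hγ₀ hr _)]
  exact localOsc_le_two_mul hdom hγ₀ hr _

theorem exists_integral_localOsc_lt (hS : TopologicalSpace.IsSeparable S)
    (hcont : ∀ x, ContinuousOn (ψ · x) S) (hmeas : ∀ γ, Measurable (ψ γ))
    (hdom : ∀ γ ∈ S, ∀ x, ‖ψ γ x‖ ≤ M x) (hγ₀ : γ₀ ∈ S) (hY : AEMeasurable Y P)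
    (hM : Integrable (fun ω => M (Y ω)) P) {η : ℝ} (hη : 0 < η) :
    ∃ r > 0, ∫ ω, localOsc ψ S γ₀ r (Y ω) ∂P < η := by
  have hpos : ∀ᶠ r in 𝓝[>] (0 : ℝ), 0 < r := self_mem_nhdsWithin
  have hlim : Tendsto (fun r => ∫ ω, localOsc ψ S γ₀ r (Y ω) ∂P) (𝓝[>] 0) (𝓝 0) := by
    simpa using tendsto_integral_filter_of_dominated_convergence (fun ω => 2 * M (Y ω))
      (hpos.mono fun r hr =>
        (integrable_localOsc_comp hS hcont hmeas hdom hγ₀ hr.le hY hM).aestronglyMeasurable)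
      (hpos.mono fun r hr => ae_of_all _ fun ω => by
        rw [Real.norm_of_nonneg (localOsc_nonneg hdom hγ₀ hr.le _)]
        exact localOsc_le_two_mul hdom hγ₀ hr.le _)
      (hM.const_mul 2) (ae_of_all _ fun ω => tendsto_localOsc hcont hdom hγ₀ (Y ω))
  exact (hpos.and (hlim.eventually (gt_mem_nhds hη))).exists

end LocalOscillation

theorem weak_law_tendstoInMeasure {Ω E : Type*} [MeasurableSpace Ω] {μ : Measure Ω}
    [IsFiniteMeasure μ] [NormedAddCommGroup E] [NormedSpace ℝ E] [CompleteSpace E]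
    [MeasurableSpace E] [BorelSpace E] (Y : ℕ → Ω → E) (hint : Integrable (Y 0) μ)
    (hindep : Pairwise fun i j => Y i ⟂ᵢ[μ] Y j) (hident : ∀ i, IdentDistrib (Y i) (Y 0) μ μ) :
    TendstoInMeasure μ (fun (n : ℕ) ω => (n : ℝ)⁻¹ • ∑ i ∈ Finset.range n, Y i ω) atTop
      (fun _ => μ[Y 0]) :=
  tendstoInMeasure_of_tendsto_ae (fun _ => AEStronglyMeasurable.const_smul
      (Finset.aestronglyMeasurable_fun_sum _ fun i _ =>
        (hident i).aestronglyMeasurable_iff.2 hint.1) _)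
    (strong_law_ae Y hint hindep hident)

/-- `empiricalMean (ψ γ) X n ω` is the sample estimating function `Ψ_n(γ)` at `ω`. -/
noncomputable def empiricalMean {𝒳 Ω E : Type*} [AddCommMonoid E] [Module ℝ E] (f : 𝒳 → E)
    (X : ℕ → Ω → 𝒳) (n : ℕ) (ω : Ω) : E :=
  (n : ℝ)⁻¹ • ∑ i ∈ Finset.range n, f (X i ω)

theorem norm_empiricalMean_sub_le {𝒳 Ω E : Type*} [SeminormedAddCommGroup E] [NormedSpace ℝ E]
    {f g : 𝒳 → E} {D : 𝒳 → ℝ} (h : ∀ x, ‖f x - g x‖ ≤ D x) (X : ℕ → Ω → 𝒳) (n : ℕ) (ω : Ω) :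
    ‖empiricalMean f X n ω - empiricalMean g X n ω‖ ≤ empiricalMean D X n ω := by
  simp only [empiricalMean, ← smul_sub, ← Finset.sum_sub_distrib, norm_smul, smul_eq_mul,
    norm_inv, RCLike.norm_natCast]
  exact mul_le_mul_of_nonneg_left ((norm_sum_le _ _).trans (Finset.sum_le_sum fun i _ => h _))
    (by positivity)

theorem tendsto_measure_le_norm_empiricalMean_sub_integral {𝒳 Ω E : Type*} [MeasurableSpace 𝒳]
    [MeasurableSpace Ω] {P : Measure Ω} [IsFiniteMeasure P] {X : ℕ → Ω → 𝒳}
    [NormedAddCommGroup E] [NormedSpace ℝ E] [CompleteSpace E] [MeasurableSpace E]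
    [BorelSpace E] {f : 𝒳 → E} (hf : Measurable f) (hindep : Pairwise fun i j => X i ⟂ᵢ[P] X j)
    (hident : ∀ i, IdentDistrib (X i) (X 0) P P) (hint : Integrable (fun ω => f (X 0 ω)) P)
    {η : ℝ} (hη : 0 < η) :
    Tendsto (fun n => P {ω | η ≤ ‖empiricalMean f X n ω - ∫ ω', f (X 0 ω') ∂P‖}) atTop (𝓝 0) :=
  tendstoInMeasure_iff_norm.1 (weak_law_tendstoInMeasure (fun i => f ∘ X i) hint
    (fun _ _ hij => (hindep hij).comp hf hf) fun i => (hident i).comp hf) η hη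

section UniformLaw

variable {α 𝒳 Ω E : Type*} [PseudoMetricSpace α] [MeasurableSpace 𝒳] [MeasurableSpace Ω]
  {P : Measure Ω} [NormedAddCommGroup E] [NormedSpace ℝ E] [MeasurableSpace E] [BorelSpace E]
  [SecondCountableTopology E] {S : Set α} {ψ : α → 𝒳 → E} {X : ℕ → Ω → 𝒳} {M : 𝒳 → ℝ}

theorem norm_empiricalMean_sub_integral_le_of_mem_closedBall
    (hS : TopologicalSpace.IsSeparable S) (hcont : ∀ x, ContinuousOn (ψ · x) S)
    (hmeas : ∀ γ, Measurable (ψ γ)) (hdom : ∀ γ ∈ S, ∀ x, ‖ψ γ x‖ ≤ M x)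
    (hX : AEMeasurable (X 0) P) (hM : Integrable (fun ω => M (X 0 ω)) P) {γ₀ γ : α} {r : ℝ}
    (hγ₀ : γ₀ ∈ S) (hr : 0 ≤ r) (hγ : γ ∈ closedBall γ₀ r ∩ S) (n : ℕ) (ω : Ω) :
    ‖empiricalMean (ψ γ) X n ω - ∫ ω', ψ γ (X 0 ω') ∂P‖ ≤
      ‖empiricalMean (ψ γ₀) X n ω - ∫ ω', ψ γ₀ (X 0 ω') ∂P‖ +
      ‖empiricalMean (localOsc ψ S γ₀ r) X n ω - ∫ ω', localOsc ψ S γ₀ r (X 0 ω') ∂P‖ +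
      2 * ∫ ω', localOsc ψ S γ₀ r (X 0 ω') ∂P := by
  have hosc := norm_sub_le_localOsc hdom hγ₀ hγ
  have hint : ∀ γ' ∈ S, Integrable (fun ω => ψ γ' (X 0 ω)) P := fun γ' hγ' =>
    hM.mono' ((hmeas γ').comp_aemeasurable hX).aestronglyMeasurable
      (ae_of_all _ fun ω => hdom γ' hγ' _)
  have hmean := norm_empiricalMean_sub_le hosc X n ω
  have hintegral : ‖∫ ω', ψ γ (X 0 ω') ∂P - ∫ ω', ψ γ₀ (X 0 ω') ∂P‖ ≤
      ∫ ω', localOsc ψ S γ₀ r (X 0 ω') ∂P := by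
    rw [← integral_sub (hint γ hγ.2) (hint γ₀ hγ₀)]
    exact (norm_integral_le_integral_norm _).trans <| integral_mono ((hint γ hγ.2).sub
      (hint γ₀ hγ₀)).norm (integrable_localOsc_comp hS hcont hmeas hdom hγ₀ hr hX hM)
      fun ω => hosc _
  have hosc_mean := le_abs_self (empiricalMean (localOsc ψ S γ₀ r) X n ω -
    ∫ ω', localOsc ψ S γ₀ r (X 0 ω') ∂P)
  rw [← Real.norm_eq_abs] at hosc_mean
  calc _ = ‖(empiricalMean (ψ γ) X n ω - empiricalMean (ψ γ₀) X n ω) +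
          (empiricalMean (ψ γ₀) X n ω - ∫ ω', ψ γ₀ (X 0 ω') ∂P) -
          (∫ ω', ψ γ (X 0 ω') ∂P - ∫ ω', ψ γ₀ (X 0 ω') ∂P)‖ := by congr 1; abel
    _ ≤ _ := norm_sub_le_of_le (norm_add_le _ _) le_rfl
    _ ≤ _ := by linarith

/-- The event need not be measurable: `P` is evaluated on it as an outer measure. -/
theorem tendsto_measure_exists_le_norm_empiricalMean_sub_integral [IsFiniteMeasure P]
    [CompleteSpace E] (hS : IsCompact S) (hcont : ∀ x, ContinuousOn (ψ · x) S)
    (hmeas : ∀ γ, Measurable (ψ γ)) (hindep : Pairwise fun i j => X i ⟂ᵢ[P] X j)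
    (hident : ∀ i, IdentDistrib (X i) (X 0) P P) (hM : Integrable (fun ω => M (X 0 ω)) P)
    (hdom : ∀ γ ∈ S, ∀ x, ‖ψ γ x‖ ≤ M x) {η : ℝ} (hη : 0 < η) :
    Tendsto (fun n => P {ω | ∃ γ ∈ S, η ≤ ‖empiricalMean (ψ γ) X n ω - ∫ ω', ψ γ (X 0 ω') ∂P‖})
      atTop (𝓝 0) := by
  have hX := (hident 0).aemeasurable_fst
  have hsep := hS.isSeparable
  choose! r hr hr_small using fun γ₀ (hγ₀ : γ₀ ∈ S) =>
    exists_integral_localOsc_lt hsep hcont hmeas hdom hγ₀ hX hM (by positivity : 0 < η / 4)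
  obtain ⟨t, htS, hcover⟩ := hS.elim_nhds_subcover (fun γ₀ => ball γ₀ (r γ₀))
    fun γ₀ hγ₀ => ball_mem_nhds _ (hr γ₀ hγ₀)
  refine tendsto_measure_of_subset_biUnion t (fun n ω ⟨γ, hγ, hle⟩ => ?_) fun j hj =>
    tendsto_measure_of_subset_union (fun _ => subset_rfl)
      (tendsto_measure_le_norm_empiricalMean_sub_integral (hmeas j) hindep hident
        (hM.mono' ((hmeas j).comp_aemeasurable hX).aestronglyMeasurable
          (ae_of_all _ fun ω => hdom j (htS j hj) _)) (by positivity : 0 < η / 4))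
      (tendsto_measure_le_norm_empiricalMean_sub_integral
        (measurable_localOsc hsep hcont hmeas hdom (htS j hj)) hindep hident
        (integrable_localOsc_comp hsep hcont hmeas hdom (htS j hj) (hr j (htS j hj)).le hX hM)
        (by positivity : 0 < η / 4))
  obtain ⟨j, hj, hγj⟩ := mem_iUnion₂.1 (hcover hγ)
  have hbound := norm_empiricalMean_sub_integral_le_of_mem_closedBall hsep hcont hmeas hdom hX
    hM (htS j hj) (hr j (htS j hj)).le ⟨ball_subset_closedBall hγj, hγ⟩ n ω
  have hsmall := hr_small j (htS j hj)
  simp only [mem_iUnion₂, mem_union, mem_ofPred_eq]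
  by_contra! h
  obtain ⟨h₁, h₂⟩ := h j hj
  linarith

theorem continuousOn_integral_comp (hcont : ∀ x, ContinuousOn (ψ · x) S)
    (hmeas : ∀ γ, Measurable (ψ γ)) (hdom : ∀ γ ∈ S, ∀ x, ‖ψ γ x‖ ≤ M x)
    (hX : AEMeasurable (X 0) P) (hM : Integrable (fun ω => M (X 0 ω)) P) :
    ContinuousOn (fun γ => ∫ ω, ψ γ (X 0 ω) ∂P) S :=
  continuousOn_of_dominated (fun γ _ => ((hmeas γ).comp_aemeasurable hX).aestronglyMeasurable)
    (fun γ hγ => ae_of_all _ fun _ => hdom γ hγ _) hM (ae_of_all _ fun ω => hcont (X 0 ω))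

end UniformLaw

theorem stmt7_general {d : ℕ} {𝒳 : Type*} [MeasurableSpace 𝒳]
    {Ω : Type*} [MeasurableSpace Ω] (P : Measure Ω) [IsProbabilityMeasure P]
    (Γs : Set (EuclideanSpace ℝ (Fin d))) (hΓ : IsCompact Γs)
    (ψ : EuclideanSpace ℝ (Fin d) → 𝒳 → EuclideanSpace ℝ (Fin d))
    (hcont : ∀ x, ContinuousOn (fun γ => ψ γ x) Γs)
    (hmeas : ∀ γ, Measurable (ψ γ))
    (X : ℕ → Ω → 𝒳)
    (hindep : iIndepFun X P)
    (hident : ∀ i, IdentDistrib (X i) (X 0) P P)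
    (M : 𝒳 → ℝ) (hMint : Integrable (fun ω => M (X 0 ω)) P)
    (hdom : ∀ γ ∈ Γs, ∀ x, ‖ψ γ x‖ ≤ M x)
    (Γstar : Set (EuclideanSpace ℝ (Fin d)))
    (hΓstar : Γstar = {γ ∈ Γs | (∫ ω, ψ γ (X 0 ω) ∂P) = 0})
    (γhat : ℕ → Ω → EuclideanSpace ℝ (Fin d))
    (hγhatmem : ∀ n ω, γhat n ω ∈ Γs)
    (happrox : ∀ ε > 0, Tendsto (fun n : ℕ =>
      P {ω | ε ≤ ‖((n : ℝ))⁻¹ • (∑ i ∈ Finset.range n, ψ (γhat n ω) (X i ω))‖})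
      atTop (nhds 0)) :
    ∀ ε > 0, Tendsto (fun n : ℕ =>
      P {ω | ε ≤ Metric.infDist (γhat n ω) Γstar}) atTop (nhds 0) := by
  intro ε hε
  have hX := (hident 0).aemeasurable_fst
  have hfar : IsCompact (Γs ∩ {γ | ε ≤ infDist γ Γstar}) :=
    hΓ.inter_right (isClosed_le continuous_const (continuous_infDist_pt Γstar))
  obtain ⟨δ, hδ, hmean_ge⟩ := hfar.exists_pos_forall_le_norm
    ((continuousOn_integral_comp hcont hmeas hdom hX hMint).mono inter_subset_left)
    fun γ ⟨hγ, hγε⟩ h₀ => by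
      have hγstar : γ ∈ Γstar := hΓstar ▸ ⟨hγ, h₀⟩
      linarith [infDist_zero_of_mem hγstar, show ε ≤ infDist γ Γstar from hγε]
  refine tendsto_measure_of_subset_union (fun n ω hω => ?_) (happrox (δ / 2) (half_pos hδ))
    (tendsto_measure_exists_le_norm_empiricalMean_sub_integral hΓ hcont hmeas
      (fun _ _ hij => hindep.indepFun hij) hident hMint hdom (half_pos hδ))
  have hfar_ge := hmean_ge _ ⟨hγhatmem n ω, hω⟩
  by_contra! h
  simp only [mem_union, mem_ofPred_eq, not_or, not_le, not_exists, not_and] at h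
  have hmean_lt : ‖empiricalMean (ψ (γhat n ω)) X n ω‖ < δ / 2 := h.1
  linarith [h.2 _ (hγhatmem n ω), norm_le_norm_add_norm_sub
    (empiricalMean (ψ (γhat n ω)) X n ω) (∫ ω', ψ (γhat n ω) (X 0 ω') ∂P)]

/-- Theorem 1 of the paper: asymptotic consistency without unique
identifiability. Let `Γ* = {γ ∈ Γ : E[ψ(γ, X)] = 0}` be nonempty. Any sequence `γ̂_n` of
`Γ`-valued random vectors with `‖Ψ_n(γ̂_n)‖ → 0` in probability satisfies
`d(γ̂_n, Γ*) → 0` in probability. -/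
theorem stmt7 {d : ℕ} {𝒳 : Type*} [MeasurableSpace 𝒳]
    {Ω : Type*} [MeasurableSpace Ω] (P : Measure Ω) [IsProbabilityMeasure P]
    (Γs : Set (EuclideanSpace ℝ (Fin d))) (hΓ : IsCompact Γs)
    (ψ : EuclideanSpace ℝ (Fin d) → 𝒳 → EuclideanSpace ℝ (Fin d))
    (hcont : ∀ x, ContinuousOn (fun γ => ψ γ x) Γs)
    (hmeas : ∀ γ, Measurable (ψ γ))
    (X : ℕ → Ω → 𝒳) (hXmeas : ∀ i, Measurable (X i))
    (hindep : iIndepFun X P)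
    (hident : ∀ i, IdentDistrib (X i) (X 0) P P)
    (M : 𝒳 → ℝ) (hMint : Integrable (fun ω => M (X 0 ω)) P)
    (hdom : ∀ γ ∈ Γs, ∀ x, ‖ψ γ x‖ ≤ M x)
    (Γstar : Set (EuclideanSpace ℝ (Fin d)))
    (hΓstar : Γstar = {γ ∈ Γs | (∫ ω, ψ γ (X 0 ω) ∂P) = 0})
    (hΓstarne : Γstar.Nonempty)
    (γhat : ℕ → Ω → EuclideanSpace ℝ (Fin d))
    (hγhatmeas : ∀ n, Measurable (γhat n))
    (hγhatmem : ∀ n ω, γhat n ω ∈ Γs)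
    (happrox : ∀ ε > 0, Tendsto (fun n : ℕ =>
      P {ω | ε ≤ ‖((n : ℝ))⁻¹ • (∑ i ∈ Finset.range n, ψ (γhat n ω) (X i ω))‖})
      atTop (nhds 0)) :
    ∀ ε > 0, Tendsto (fun n : ℕ =>
      P {ω | ε ≤ Metric.infDist (γhat n ω) Γstar}) atTop (nhds 0) :=
  stmt7_general P Γs hΓ ψ hcont hmeas X hindep hident M hMint hdom Γstar hΓstar γhat hγhatmem
    happrox
end
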